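/- arXiv:2105.08945 — 2 statements merged into one kernel-verified Lean document; each statement's English description precedes it below -/
import Mathlib

section
/- Let m, n be coprime positive integers and k a field whose characteristic does not divide mn (or char(k)=0). Then the set of (m,n)-torus-knot representations into AGL_1(k), namely {(t,α,β) ∈ k* × k × k : Φ_n(t^m)·α = Φ_m(t^n)·β}, has cardinality over a finite field k = F_q equal to (ξ_{nm} - ξ_n - ξ_m + 2)(q² - q), where ξ_l = gcd(l, q-1) is the number of l-th roots of unity in F_q. -/
/-!
For fixed `t ≠ 0` the equation `Φ_n(t^m) α = Φ_m(t^n) β` cuts out a line in `F_q²`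
(`q` points) unless both coefficients vanish, in which case it is the whole plane (`q²` points).
Since `(x - 1) Φ_l(x) = x^l - 1` and `l ≠ 0` in `F`, `Φ_l(x)` vanishes iff `x^l = 1` and
`x ≠ 1`; so both coefficients vanish exactly on the `nm`-th roots of unity that are neither
`n`-th nor `m`-th roots of unity. By coprimality `1` is the only common `n`-th and `m`-th root
of unity, and as `F_q^*` is cyclic of order `q - 1` there are `ξ_l` `l`-th roots of unity, so
this locus has `ξ_{nm} - ξ_n - ξ_m + 1` points. The count is
`(q - 1) q + (ξ_{nm} - ξ_n - ξ_m + 1)(q² - q)`.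
-/

section

open Finset

theorem geom_sum_eq_zero_iff_of_natCast_ne_zero {R : Type*} [CommRing R] [IsDomain R] {x : R}
    {n : ℕ} (hn : (n : R) ≠ 0) : ∑ i ∈ range n, x ^ i = 0 ↔ x ^ n = 1 ∧ x ≠ 1 := by
  rcases eq_or_ne x 1 with rfl | hx
  · simp [hn]
  · rw [← mul_left_inj' (sub_ne_zero.mpr hx), geom_sum_mul, zero_mul, sub_eq_zero]
    simp [hx]

theorem ne_zero_and_geom_sums_eq_zero_iff {R : Type*} [CommRing R] [IsDomain R] {m n : ℕ}
    (hm : (m : R) ≠ 0) (hn : (n : R) ≠ 0) (t : R) :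
    (t ≠ 0 ∧ ∑ i ∈ range n, (t ^ m) ^ i = 0 ∧ ∑ i ∈ range m, (t ^ n) ^ i = 0) ↔
      t ^ (n * m) = 1 ∧ t ^ n ≠ 1 ∧ t ^ m ≠ 1 := by
  rw [geom_sum_eq_zero_iff_of_natCast_ne_zero hn, geom_sum_eq_zero_iff_of_natCast_ne_zero hm,
    ← pow_mul, ← pow_mul, mul_comm m n]
  constructor
  · rintro ⟨-, ⟨h, hm1⟩, -, hn1⟩
    exact ⟨h, hn1, hm1⟩
  · rintro ⟨h, hn1, hm1⟩
    refine ⟨?_, ⟨h, hm1⟩, h, hn1⟩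
    rintro rfl
    have hm0 : m ≠ 0 := fun h0 => hm (by simp [h0])
    have hn0 : n ≠ 0 := fun h0 => hn (by simp [h0])
    simp [zero_pow (mul_ne_zero hn0 hm0)] at h

variable {F : Type*} [Field F] [Fintype F] [DecidableEq F]

theorem card_filter_mul_eq_mul (a b : F) :
    #{xy : F × F | a * xy.1 = b * xy.2} =
      if a = 0 ∧ b = 0 then Fintype.card F ^ 2 else Fintype.card F := by
  split_ifs with hab
  · obtain ⟨rfl, rfl⟩ := hab
    simp [sq]
  · have hinj : Function.Injective fun s : F => (b * s, a * s) := fun s s' h => by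
      simp only [Prod.mk.injEq] at h
      rcases not_and_or.mp hab with ha | hb
      · exact mul_left_cancel₀ ha h.2
      · exact mul_left_cancel₀ hb h.1
    have hline : ({xy : F × F | a * xy.1 = b * xy.2} : Finset _) =
        univ.image fun s => (b * s, a * s) := by
      ext ⟨x, y⟩
      simp only [mem_filter, mem_univ, true_and, mem_image, Prod.mk.injEq]
      constructor
      · intro h
        rcases not_and_or.mp hab with ha | hb
        · exact ⟨y / a, by field_simp; exact h.symm, by field_simp⟩
        · exact ⟨x / b, by field_simp, by field_simp; exact h⟩
      · rintro ⟨s, rfl, rfl⟩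
        ring
    rw [hline, card_image_of_injective _ hinj, card_univ]

theorem card_filter_mul_eq_mul_family {ι : Type*} [Fintype ι] (S : ι → Prop) [DecidablePred S]
    (a b : ι → F) :
    (#{p : ι × F × F | S p.1 ∧ a p.1 * p.2.1 = b p.1 * p.2.2} : ℤ) =
      #{t | S t} * Fintype.card F +
        #{t | S t ∧ a t = 0 ∧ b t = 0} * ((Fintype.card F : ℤ) ^ 2 - Fintype.card F) := by
  have hfiber : ∀ t, (#{xy : F × F | a t * xy.1 = b t * xy.2} : ℤ) =
      Fintype.card F +
        if a t = 0 ∧ b t = 0 then (Fintype.card F : ℤ) ^ 2 - Fintype.card F else 0 := by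
    intro t
    rw [card_filter_mul_eq_mul]
    split_ifs <;> push_cast <;> ring
  calc (#{p : ι × F × F | S p.1 ∧ a p.1 * p.2.1 = b p.1 * p.2.2} : ℤ)
      = ∑ t with S t, (#{xy : F × F | a t * xy.1 = b t * xy.2} : ℤ) := by
        simp only [natCast_card_filter, Fintype.sum_prod_type, sum_filter, ite_and, sum_ite_irrel,
          sum_const_zero]
    _ = _ := by
        simp only [hfiber, sum_add_distrib, sum_const, sum_ite, filter_filter, nsmul_eq_mul,
          smul_zero, add_zero]

theorem card_filter_pow_eq_one (l : ℕ) [NeZero l] :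
    #{t : F | t ^ l = 1} = l.gcd (Fintype.card F - 1) := by
  have e : {t : F // t ^ l = 1} ≃ rootsOfUnity l F :=
    (Equiv.subtypeEquivRight fun _ => (Polynomial.mem_nthRoots (NeZero.pos l)).symm).trans
      (rootsOfUnityEquivNthRoots F l).symm
  rw [← Fintype.card_subtype, ← Nat.card_eq_fintype_card, Nat.card_congr e, rootsOfUnity_eq_ker,
    IsCyclic.card_powMonoidHom_ker, Nat.card_eq_fintype_card, Fintype.card_units, Nat.gcd_comm]

theorem card_filter_pow_mul_eq_one_and_pow_ne_one {m n : ℕ} [NeZero m] [NeZero n]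
    (hmn : m.Coprime n) :
    (#{t : F | t ^ (n * m) = 1 ∧ t ^ n ≠ 1 ∧ t ^ m ≠ 1} : ℤ) =
      (n * m).gcd (Fintype.card F - 1) - n.gcd (Fintype.card F - 1) -
        m.gcd (Fintype.card F - 1) + 1 := by
  set R : ℕ → Finset F := fun l => {t | t ^ l = 1}
  have hsub : R n ∪ R m ⊆ R (n * m) := by
    intro t
    simp only [R, mem_union, mem_filter, mem_univ, true_and]
    rintro (h | h)
    · rw [pow_mul, h, one_pow]
    · rw [mul_comm, pow_mul, h, one_pow]
  have hinter : R n ∩ R m = {1} := by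
    ext t
    simp only [R, mem_inter, mem_filter, mem_univ, true_and, mem_singleton, ← pow_gcd_eq_one,
      Nat.Coprime.gcd_eq_one hmn.symm, pow_one]
  have hsdiff : ({t : F | t ^ (n * m) = 1 ∧ t ^ n ≠ 1 ∧ t ^ m ≠ 1} : Finset F) =
      R (n * m) \ (R n ∪ R m) := by
    ext t
    simp [R]
  have hunion := card_union_add_card_inter (R n) (R m)
  rw [hinter, card_singleton] at hunion
  rw [hsdiff, card_sdiff_of_subset hsub, Nat.cast_sub (card_le_card hsub)]
  simp only [R, card_filter_pow_eq_one] at hunion ⊢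
  omega

end

/-- The `AGL₁(F_q)`-representation variety of the `(m,n)`-torus knot, identified with
`{(t,α,β) ∈ F_q* × F_q² : Φ_n(t^m)α = Φ_m(t^n)β}`, has
`(ξ_{nm} - ξ_n - ξ_m + 2)(q² - q)` points, where `ξ_l = gcd(l, q-1)`. -/
theorem stmt11 (F : Type*) [Field F] [Fintype F] (m n : ℕ) (hm : 0 < m) (hn : 0 < n)
    (hcop : Nat.Coprime m n) (hchar : ¬ ringChar F ∣ m * n) :
    (Nat.card {p : F × F × F | p.1 ≠ 0 ∧
        (∑ i ∈ Finset.range n, (p.1 ^ m) ^ i) * p.2.1 =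
        (∑ i ∈ Finset.range m, (p.1 ^ n) ^ i) * p.2.2} : ℤ) =
      ((Nat.gcd (n * m) (Fintype.card F - 1) : ℤ)
          - Nat.gcd n (Fintype.card F - 1) - Nat.gcd m (Fintype.card F - 1) + 2) *
        ((Fintype.card F : ℤ) ^ 2 - Fintype.card F) := by
  classical
  have hm' : (m : F) ≠ 0 := fun h => hchar (((ringChar.spec F m).mp h).mul_right n)
  have hn' : (n : F) ≠ 0 := fun h => hchar (((ringChar.spec F n).mp h).mul_left m)
  have : NeZero m := ⟨hm.ne'⟩
  have : NeZero n := ⟨hn.ne'⟩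
  open Finset in
  rw [Nat.card_eq_card_toFinset, Set.toFinset_ofPred,
    card_filter_mul_eq_mul_family (· ≠ 0) (fun t => ∑ i ∈ range n, (t ^ m) ^ i)
      (fun t => ∑ i ∈ range m, (t ^ n) ^ i),
    filter_congr fun t _ => ne_zero_and_geom_sums_eq_zero_iff hm' hn' t,
    card_filter_pow_mul_eq_one_and_pow_ne_one hcop, filter_ne' univ 0,
    card_erase_of_mem (mem_univ 0), card_univ, Nat.cast_sub Fintype.card_pos]
  ring
end

section
/- For coprime integers m, n > 2, there is no single polynomial P ∈ ℤ[t] such that P(p) equals the number of points over F_p of the AGL_1 representation variety of the (m,n)-torus knot, i.e., P(p) = (gcd(nm,p-1) - gcd(n,p-1) - gcd(m,p-1) + 2)(p² - p), for all sufficiently large primes p. -/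
/-!
Along primes `p ≡ 1 (mod nm)` every gcd in the formula is maximal and the count is
`((n-1)(m-1)+1)(p² - p)`; along primes `p ≡ -1 (mod nm)` each `gcd(d, p-1)` with `d ∣ nm`
collapses to `gcd(d, 2)`, and coprimality makes the count `p² - p`. Both classes contain
infinitely many primes by Dirichlet's theorem, so a polynomial interpolating the count would
equal both `((n-1)(m-1)+1)(X² - X)` and `X² - X`, which forces `(n-1)(m-1) = 0`.
-/

open Polynomial

theorem Polynomial.eq_of_eval_eq_of_prime_eq_mod {R : Type*} [CommRing R] [IsDomain R]
    [CharZero R] {q : ℕ} [NeZero q] {a : ZMod q} (ha : IsUnit a) {P Q : R[X]} (N : ℕ)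
    (h : ∀ p : ℕ, p.Prime → N < p → (p : ZMod q) = a → P.eval (p : R) = Q.eval (p : R)) :
    P = Q := by
  apply eq_of_infinite_eval_eq
  have hprimes : {p : ℕ | p.Prime ∧ N < p ∧ (p : ZMod q) = a}.Infinite := by
    refine Set.infinite_of_forall_exists_gt fun k => ?_
    obtain ⟨p, hpk, hp, hpa⟩ := Nat.forall_exists_prime_gt_and_eq_mod ha (max k N)
    exact ⟨p, ⟨hp, by omega, hpa⟩, by omega⟩
  refine (hprimes.image Nat.cast_injective.injOn).mono ?_
  rintro _ ⟨p, ⟨hp, hpN, hpa⟩, rfl⟩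
  exact h p hp hpN hpa

theorem Nat.gcd_eq_gcd_two_of_dvd_add_two {d k : ℕ} (h : d ∣ k + 2) :
    Nat.gcd d k = Nat.gcd d 2 := by
  apply Nat.dvd_antisymm
  · exact Nat.dvd_gcd (Nat.gcd_dvd_left d k)
      ((Nat.dvd_add_right (Nat.gcd_dvd_right d k)).mp ((Nat.gcd_dvd_left d k).trans h))
  · exact Nat.dvd_gcd (Nat.gcd_dvd_left d 2)
      ((Nat.dvd_add_left (Nat.gcd_dvd_right d 2)).mp ((Nat.gcd_dvd_left d 2).trans h))

theorem Nat.sub_one_dvd_of_cast_eq_one {q p : ℕ} (hp : 1 ≤ p) (h : (p : ZMod q) = 1) :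
    q ∣ p - 1 :=
  (ZMod.natCast_eq_zero_iff _ _).mp (by rw [Nat.cast_sub hp, h, Nat.cast_one, sub_self])

theorem Nat.add_one_dvd_of_cast_eq_neg_one {q p : ℕ} (h : (p : ZMod q) = -1) : q ∣ p + 1 :=
  (ZMod.natCast_eq_zero_iff _ _).mp (by rw [Nat.cast_add, h, Nat.cast_one, neg_add_cancel])

/-- The factor in front of `p² - p` in the point count of `Rep_{m,n}(AGL₁)` over `𝔽_p`,
evaluated at `k = p - 1`. -/
def agl1PointCoeff (n m k : ℕ) : ℤ :=
  (Nat.gcd (n * m) k : ℤ) - Nat.gcd n k - Nat.gcd m k + 2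

section agl1PointCoeff

variable {n m : ℕ}

theorem agl1PointCoeff_eq (hcop : n.Coprime m) (k : ℕ) :
    agl1PointCoeff n m k = ((Nat.gcd n k : ℤ) - 1) * ((Nat.gcd m k : ℤ) - 1) + 1 := by
  rw [agl1PointCoeff, Nat.gcd_comm (n * m), Nat.Coprime.gcd_mul k hcop, Nat.gcd_comm k n,
    Nat.gcd_comm k m]
  push_cast
  ring

theorem agl1PointCoeff_of_mul_dvd (hcop : n.Coprime m) {k : ℕ} (h : n * m ∣ k) :
    agl1PointCoeff n m k = ((n : ℤ) - 1) * ((m : ℤ) - 1) + 1 := by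
  rw [agl1PointCoeff_eq hcop, Nat.gcd_eq_left (dvd_of_mul_right_dvd h),
    Nat.gcd_eq_left (dvd_of_mul_left_dvd h)]

theorem agl1PointCoeff_of_mul_dvd_add_two (hcop : n.Coprime m) {k : ℕ} (h : n * m ∣ k + 2) :
    agl1PointCoeff n m k = 1 := by
  rw [agl1PointCoeff_eq hcop, Nat.gcd_eq_gcd_two_of_dvd_add_two ((dvd_mul_right n m).trans h),
    Nat.gcd_eq_gcd_two_of_dvd_add_two ((dvd_mul_left m n).trans h)]
  rcases (Nat.dvd_prime Nat.prime_two).mp (Nat.gcd_dvd_right n 2) with hn | hn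
  · simp [hn]
  rcases (Nat.dvd_prime Nat.prime_two).mp (Nat.gcd_dvd_right m 2) with hm | hm
  · simp [hm]
  exact absurd hcop (Nat.not_coprime_of_dvd_of_dvd one_lt_two
    (hn ▸ Nat.gcd_dvd_left n 2) (hm ▸ Nat.gcd_dvd_left m 2))

end agl1PointCoeff

/-- For coprime `m, n > 2`, no single integer polynomial `P` satisfies
`P(p) = (gcd(nm,p-1) - gcd(n,p-1) - gcd(m,p-1) + 2)(p² - p)` for all sufficiently
large primes `p`. -/
theorem stmt12 (m n : ℕ) (hm : 2 < m) (hn : 2 < n) (hcop : Nat.Coprime m n) :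
    ¬ ∃ (P : Polynomial ℤ) (N : ℕ), ∀ p : ℕ, p.Prime → N < p →
      P.eval (p : ℤ) =
        ((Nat.gcd (n * m) (p - 1) : ℤ) - Nat.gcd n (p - 1) - Nat.gcd m (p - 1) + 2) *
          ((p : ℤ) ^ 2 - p) := by
  rintro ⟨P, N, hP⟩
  have : NeZero (n * m) := ⟨by positivity⟩
  have h_one : P = C (((n : ℤ) - 1) * ((m : ℤ) - 1) + 1) * (X ^ 2 - X) :=
    eq_of_eval_eq_of_prime_eq_mod isUnit_one N fun p hp hpN hpa => by
      rw [hP p hp hpN, ← agl1PointCoeff, agl1PointCoeff_of_mul_dvd hcop.symm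
        (Nat.sub_one_dvd_of_cast_eq_one hp.one_lt.le hpa)]
      simp
  have h_neg_one : P = X ^ 2 - X :=
    eq_of_eval_eq_of_prime_eq_mod isUnit_one.neg N fun p hp hpN hpa => by
      have hdvd : n * m ∣ p - 1 + 2 := by
        rw [show p - 1 + 2 = p + 1 by have := hp.one_lt; omega]
        exact Nat.add_one_dvd_of_cast_eq_neg_one hpa
      rw [hP p hp hpN, ← agl1PointCoeff, agl1PointCoeff_of_mul_dvd_add_two hcop.symm hdvd]
      simp
  have h_eval := congrArg (eval 2) (h_one.symm.trans h_neg_one)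
  simp only [eval_mul, eval_C, eval_sub, eval_pow, eval_X] at h_eval
  have hm' : (3 : ℤ) ≤ m := by exact_mod_cast hm
  have hn' : (3 : ℤ) ≤ n := by exact_mod_cast hn
  nlinarith
end
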